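/- arXiv:2406.14241 — 4 statements merged into one kernel-verified Lean document; each statement's English description precedes it below -/
import Mathlib

section
/- Let X be an infinite dimensional real vector space and let P : X → ℝ be given by P(x) = Σ_{j=1}^k a_j (φ_j(x))^m with a_j ∈ ℝ and φ_j linear functionals, m ≥ 1. Then for every finite dimensional subspace W of X on which P vanishes, there exists an infinite dimensional subspace V of X with W ⊆ V and P vanishing on V. -/
theorem stmt_4 {X : Type*} [AddCommGroup X] [Module ℝ X]
    (hX : ¬ Module.Finite ℝ X) (k m : ℕ) (hm : 1 ≤ m)
    (a : Fin k → ℝ) (φ : Fin k → (X →ₗ[ℝ] ℝ)) (P : X → ℝ)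
    (hP : ∀ x, P x = ∑ j, a j * (φ j x) ^ m)
    (W : Submodule ℝ X) (hW : FiniteDimensional ℝ W) (hWP : ∀ w ∈ W, P w = 0) :
    ∃ V : Submodule ℝ X, W ≤ V ∧ ¬ Module.Finite ℝ V ∧ ∀ v ∈ V, P v = 0 := by
  set Φ : X →ₗ[ℝ] (Fin k → ℝ) := LinearMap.pi φ
  set K : Submodule ℝ X := LinearMap.ker Φ
  have hKinf : ¬ Module.Finite ℝ K := by
    intro hK
    apply hX
    have hq : Module.Finite ℝ (X ⧸ K) :=
      Module.Finite.equiv (LinearMap.quotKerEquivRange Φ).symm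
    rw [← Module.rank_lt_aleph0_iff] at hK hq ⊢
    have := rank_quotient_add_rank_of_divisionRing K
    rw [← this]
    exact Cardinal.add_lt_aleph0 hq hK
  refine ⟨W ⊔ K, le_sup_left, ?_, ?_⟩
  · intro hV
    apply hKinf
    have hle : K ≤ W ⊔ K := le_sup_right
    exact Module.Finite.equiv (Submodule.comapSubtypeEquivOfLe hle)
  · intro v hv
    rcases Submodule.mem_sup.mp hv with ⟨w, hw, z, hz, rfl⟩
    have hz' : ∀ j, φ j z = 0 := by
      intro j
      have := LinearMap.mem_ker.mp hz
      exact congrFun this j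
    rw [hP]
    have : ∀ j, φ j (w + z) = φ j w := by
      intro j; rw [map_add, hz' j, add_zero]
    calc ∑ j, a j * (φ j (w + z)) ^ m = ∑ j, a j * (φ j w) ^ m := by
            simp only [this]
      _ = P w := (hP w).symm
      _ = 0 := hWP w hw
end

section
/- Let X be an infinite dimensional vector space over a field K and let B : X × X → K be a symmetric bilinear form of finite rank, i.e., B(x,y) = Σ_{j=1}^k a_j φ_j(x) φ_j(y) for scalars a_j and linear functionals φ_j. If W is a finite dimensional subspace of X on which the quadratic form x ↦ B(x,x) vanishes, then there exists an infinite dimensional subspace V ⊇ W of X on which x ↦ B(x,x) vanishes. -/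
theorem stmt_7 {K X : Type*} [Field K] [AddCommGroup X] [Module K X]
    (hX : ¬ Module.Finite K X) (k : ℕ) (a : Fin k → K) (φ : Fin k → (X →ₗ[K] K))
    (B : X → X → K) (hB : ∀ x y, B x y = ∑ j, a j * φ j x * φ j y)
    (W : Submodule K X) (hW : FiniteDimensional K W)
    (hWB : ∀ w ∈ W, B w w = 0) :
    ∃ V : Submodule K X, W ≤ V ∧ ¬ Module.Finite K V ∧ ∀ v ∈ V, B v v = 0 := by
  set Φ : X →ₗ[K] (Fin k → K) := LinearMap.pi φ with hΦ
  set N : Submodule K X := LinearMap.ker Φ with hN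
  refine ⟨W ⊔ N, le_sup_left, ?_, ?_⟩
  · intro hV
    apply hX
    have hNfin : FiniteDimensional K N :=
      Submodule.finiteDimensional_of_le (le_sup_right : N ≤ W ⊔ N)
    have hQ : FiniteDimensional K (X ⧸ N) := by
      exact Module.Finite.equiv (Φ.quotKerEquivRange).symm
    have : IsNoetherian K X := by
      rw [isNoetherian_iff_submodule_quotient N]
      exact ⟨IsNoetherian.iff_fg.mpr hNfin, IsNoetherian.iff_fg.mpr hQ⟩
    exact IsNoetherian.iff_fg.mp this
  · intro v hv
    rcases Submodule.mem_sup.mp hv with ⟨w, hw, n, hn, rfl⟩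
    have hφn : ∀ j, φ j n = 0 := by
      intro j
      have : Φ n = 0 := hn
      exact congrFun this j
    rw [hB]
    have := hWB w hw
    rw [hB] at this
    calc ∑ j, a j * φ j (w + n) * φ j (w + n)
        = ∑ j, a j * φ j w * φ j w := by
          apply Finset.sum_congr rfl
          intro j _
          rw [map_add, hφn j, add_zero]
      _ = 0 := this
end

section
/- Let X be an infinite dimensional real vector space and P₁,...,P_k : X → ℝ finite-type polynomials, i.e., each P_i(x) = Σ_j a_{ij} (φ_{ij}(x))^{m_i} with linear functionals φ_{ij} and m_i ≥ 1. Then there exists an infinite dimensional subspace Z of X contained in the common zero set ⋂_{i=1}^k P_i⁻¹(0). -/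
theorem stmt_10 {X : Type*} [AddCommGroup X] [Module ℝ X]
    (hX : ¬ Module.Finite ℝ X) (k : ℕ) (kk : Fin k → ℕ) (m : Fin k → ℕ)
    (hm : ∀ i, 1 ≤ m i)
    (a : (i : Fin k) → Fin (kk i) → ℝ) (φ : (i : Fin k) → Fin (kk i) → (X →ₗ[ℝ] ℝ))
    (P : Fin k → X → ℝ)
    (hP : ∀ i x, P i x = ∑ j, a i j * (φ i j x) ^ (m i)) :
    ∃ Z : Submodule ℝ X, ¬ Module.Finite ℝ Z ∧ ∀ i : Fin k, ∀ x ∈ Z, P i x = 0 := by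
  set L : X →ₗ[ℝ] ((i : Fin k) → Fin (kk i) → ℝ) :=
    LinearMap.pi (fun i => LinearMap.pi (fun j => φ i j)) with hL
  refine ⟨LinearMap.ker L, ?_, ?_⟩
  · intro hZ
    apply hX
    obtain ⟨q, hq⟩ := Submodule.exists_isCompl (LinearMap.ker L)
    have hquot : Module.Finite ℝ (X ⧸ LinearMap.ker L) :=
      Module.Finite.equiv L.quotKerEquivRange.symm
    have hqfin : Module.Finite ℝ q :=
      Module.Finite.equiv (Submodule.quotientEquivOfIsCompl _ q hq)
    exact Module.Finite.equiv (Submodule.prodEquivOfIsCompl _ q hq)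
  · intro i x hx
    have hφ : ∀ j, φ i j x = 0 := by
      intro j
      have : L x = 0 := hx
      have := congrFun (congrFun this i) j
      simpa [hL] using this
    rw [hP]
    apply Finset.sum_eq_zero
    intro j _
    rw [hφ j, zero_pow (by have := hm i; omega), mul_zero]
end

section
/- Let X be an infinite dimensional vector space over ℂ, let a₁,...,a_k be scalars and let φ₁,...,φ_k be linear functionals on X. Define the 2-homogeneous polynomial P(x) = Σ_{j=1}^k a_j φ_j(x)². Then for every finite dimensional subspace W contained in P⁻¹(0), there is an infinite dimensional subspace containing W and contained in P⁻¹(0). -/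
theorem stmt_16 {X : Type*} [AddCommGroup X] [Module ℂ X]
    (hX : ¬ Module.Finite ℂ X) (k : ℕ)
    (a : Fin k → ℂ) (φ : Fin k → (X →ₗ[ℂ] ℂ)) (P : X → ℂ)
    (hP : ∀ x, P x = ∑ j, a j * (φ j x) ^ 2)
    (W : Submodule ℂ X) (hW : FiniteDimensional ℂ W) (hWP : ∀ w ∈ W, P w = 0) :
    ∃ V : Submodule ℂ X, W ≤ V ∧ ¬ Module.Finite ℂ V ∧ ∀ v ∈ V, P v = 0 := by
  set f : X →ₗ[ℂ] (Fin k → ℂ) := LinearMap.pi φ with hf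
  set K : Submodule ℂ X := LinearMap.ker f with hK
  refine ⟨W ⊔ K, le_sup_left, ?_, ?_⟩
  · intro hfin
    haveI : FiniteDimensional ℂ (W ⊔ K : Submodule ℂ X) := hfin
    haveI hKfin : FiniteDimensional ℂ K :=
      Submodule.finiteDimensional_of_le (le_sup_right : K ≤ W ⊔ K)
    haveI : FiniteDimensional ℂ (LinearMap.range f) := inferInstance
    haveI hq : FiniteDimensional ℂ (X ⧸ K) :=
      Module.Finite.equiv f.quotKerEquivRange.symm
    apply hX
    rw [← Module.rank_lt_aleph0_iff, ← Submodule.rank_quotient_add_rank K]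
    exact Cardinal.add_lt_aleph0 (Module.rank_lt_aleph0 _ _) (Module.rank_lt_aleph0 _ _)
  · intro v hv
    rcases Submodule.mem_sup.mp hv with ⟨w, hw, z, hz, rfl⟩
    have hz' : ∀ j, φ j z = 0 := by
      intro j
      have := LinearMap.mem_ker.mp hz
      exact congrFun this j
    rw [hP]
    have : ∀ j, φ j (w + z) = φ j w := by
      intro j; rw [map_add, hz' j, add_zero]
    calc ∑ j, a j * (φ j (w + z)) ^ 2 = ∑ j, a j * (φ j w) ^ 2 := by
          simp only [this]
      _ = P w := (hP w).symm
      _ = 0 := hWP w hw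
end
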